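/- If a probability measure μ on a partially ordered measurable space satisfies the FKG inequality for increasing events, then for any bounded increasing measurable function g and bounded decreasing measurable function f, one has ∫ f·g dμ ≤ (∫ f dμ)·(∫ g dμ). -/

import Mathlib

/-!
Integrate the FKG inequality for events over the levels of the layer-cake representations
`∫ F = ∫₀^∞ μ {F > t} dt`: the superlevel sets of an increasing function are increasing events,
so for nonnegative increasing `F`, `G` one gets `∫ F ∫ G ≤ ∫ F G`, first against an event and
then, viewing `F · μ` as a measure, against `G`. Covariance is invariant under adding constants,
so this extends to bounded increasing functions, and `f` decreasing is handled through `-f`.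
-/

open MeasureTheory ProbabilityTheory

section

variable {Ω : Type*} [MeasurableSpace Ω] [PartialOrder Ω]

def HasFKG (μ : Measure Ω) : Prop :=
  ∀ A B : Set Ω, MeasurableSet A → MeasurableSet B →
    IsUpperSet A → IsUpperSet B → μ A * μ B ≤ μ (A ∩ B)

namespace HasFKG

variable {μ : Measure Ω} {F G : Ω → ℝ}

lemma measure_mul_lintegral_le_setLIntegral (hμ : HasFKG μ) (hFm : Measurable F)
    (hF : Monotone F) (hF0 : 0 ≤ F) {B : Set Ω} (hBm : MeasurableSet B) (hB : IsUpperSet B) :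
    μ B * ∫⁻ x, ENNReal.ofReal (F x) ∂μ ≤ ∫⁻ x in B, ENNReal.ofReal (F x) ∂μ := by
  rw [lintegral_eq_lintegral_meas_lt μ (.of_forall hF0) hFm.aemeasurable,
    lintegral_eq_lintegral_meas_lt (μ.restrict B) (.of_forall hF0) hFm.aemeasurable]
  have hanti : Antitone fun t : ℝ => μ {a | t < F a} :=
    fun _ _ hst => measure_mono fun _ ha => hst.trans_lt ha
  rw [← lintegral_const_mul _ hanti.measurable]
  refine lintegral_mono fun t => ?_
  have hmeas : MeasurableSet {a | t < F a} := measurableSet_lt measurable_const hFm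
  rw [Measure.restrict_apply hmeas, mul_comm]
  exact hμ _ _ hmeas hBm (fun _ _ hab ha => ha.trans_le (hF hab)) hB

lemma lintegral_mul_lintegral_le_lintegral_mul (hμ : HasFKG μ)
    (hFm : Measurable F) (hGm : Measurable G) (hF : Monotone F) (hG : Monotone G)
    (hF0 : 0 ≤ F) (hG0 : 0 ≤ G) :
    (∫⁻ x, ENNReal.ofReal (F x) ∂μ) * ∫⁻ x, ENNReal.ofReal (G x) ∂μ ≤
      ∫⁻ x, ENNReal.ofReal (F x) * ENNReal.ofReal (G x) ∂μ := by
  set ν := μ.withDensity fun x => ENNReal.ofReal (F x)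
  have hν : ∫⁻ x, ENNReal.ofReal (F x) * ENNReal.ofReal (G x) ∂μ
      = ∫⁻ x, ENNReal.ofReal (G x) ∂ν :=
    (lintegral_withDensity_eq_lintegral_mul μ hFm.ennreal_ofReal hGm.ennreal_ofReal).symm
  rw [hν, lintegral_eq_lintegral_meas_lt ν (.of_forall hG0) hGm.aemeasurable,
    lintegral_eq_lintegral_meas_lt μ (.of_forall hG0) hGm.aemeasurable]
  have hanti : Antitone fun t : ℝ => μ {a | t < G a} :=
    fun _ _ hst => measure_mono fun _ ha => hst.trans_lt ha
  rw [mul_comm, ← lintegral_mul_const _ hanti.measurable]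
  refine lintegral_mono fun t => ?_
  have hmeas : MeasurableSet {a | t < G a} := measurableSet_lt measurable_const hGm
  rw [withDensity_apply _ hmeas]
  exact hμ.measure_mul_lintegral_le_setLIntegral hFm hF hF0 hmeas
    fun _ _ hab ha => ha.trans_le (hG hab)

lemma integral_mul_integral_le_integral_mul_of_nonneg (hμ : HasFKG μ)
    (hFm : Measurable F) (hGm : Measurable G) (hF : Monotone F) (hG : Monotone G)
    (hF0 : 0 ≤ F) (hG0 : 0 ≤ G) (hFG : Integrable (F * G) μ) :
    (∫ x, F x ∂μ) * (∫ x, G x ∂μ) ≤ ∫ x, F x * G x ∂μ := by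
  have hFG0 : 0 ≤ F * G := mul_nonneg hF0 hG0
  have hfin := ((hasFiniteIntegral_iff_ofReal (.of_forall hFG0)).mp hFG.hasFiniteIntegral).ne
  rw [integral_eq_lintegral_of_nonneg_ae (.of_forall hF0) hFm.aestronglyMeasurable,
    integral_eq_lintegral_of_nonneg_ae (.of_forall hG0) hGm.aestronglyMeasurable,
    integral_eq_lintegral_of_nonneg_ae (f := fun x => F x * G x) (.of_forall hFG0)
      (hFm.mul hGm).aestronglyMeasurable,
    ← ENNReal.toReal_mul]
  simp only [Pi.mul_apply, ENNReal.ofReal_mul (hF0 _)] at hfin ⊢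
  exact ENNReal.toReal_mono hfin
    (hμ.lintegral_mul_lintegral_le_lintegral_mul hFm hGm hF hG hF0 hG0)

lemma integral_mul_integral_le_integral_mul [IsProbabilityMeasure μ] (hμ : HasFKG μ)
    (hFm : Measurable F) (hGm : Measurable G) (hF : Monotone F) (hG : Monotone G)
    {CF CG : ℝ} (hFb : ∀ x, |F x| ≤ CF) (hGb : ∀ x, |G x| ≤ CG) :
    (∫ x, F x ∂μ) * (∫ x, G x ∂μ) ≤ ∫ x, F x * G x ∂μ := by
  have hF2 : MemLp F 2 μ := .of_bound hFm.aestronglyMeasurable CF (.of_forall hFb)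
  have hG2 : MemLp G 2 μ := .of_bound hGm.aestronglyMeasurable CG (.of_forall hGb)
  have hF'2 : MemLp (fun x => F x + CF) 2 μ := hF2.add (memLp_const CF)
  have hG'2 : MemLp (fun x => G x + CG) 2 μ := hG2.add (memLp_const CG)
  have hcov : 0 ≤ cov[fun x => F x + CF, fun x => G x + CG; μ] := by
    rw [covariance_eq_sub hF'2 hG'2, sub_nonneg]
    refine integral_mul_integral_le_integral_mul_of_nonneg hμ (hFm.add_const CF)
      (hGm.add_const CG) (fun _ _ h => by simpa using hF h) (fun _ _ h => by simpa using hG h)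
      (fun x => show 0 ≤ F x + CF by linarith [neg_abs_le (F x), hFb x])
      (fun x => show 0 ≤ G x + CG by linarith [neg_abs_le (G x), hGb x])
      (hF'2.integrable_mul hG'2)
  rwa [covariance_add_const_left (hF2.integrable one_le_two),
    covariance_add_const_right (hG2.integrable one_le_two), covariance_eq_sub hF2 hG2,
    sub_nonneg] at hcov

end HasFKG

end

/-- the FKG inequality for increasing events extends to bounded monotone
functions: for g bounded increasing and f bounded decreasing, ∫ f·g dμ ≤ (∫ f dμ)(∫ g dμ). -/
theorem stmt13 {Ω : Type*} [MeasurableSpace Ω] [PartialOrder Ω]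
    (μ : Measure Ω) [IsProbabilityMeasure μ]
    (hFKG : ∀ A B : Set Ω, MeasurableSet A → MeasurableSet B →
      IsUpperSet A → IsUpperSet B → μ A * μ B ≤ μ (A ∩ B))
    (f g : Ω → ℝ) (hfm : Measurable f) (hgm : Measurable g)
    (hf : Antitone f) (hg : Monotone g)
    (Cf Cg : ℝ) (hfb : ∀ x, |f x| ≤ Cf) (hgb : ∀ x, |g x| ≤ Cg) :
    ∫ x, f x * g x ∂μ ≤ (∫ x, f x ∂μ) * (∫ x, g x ∂μ) := by
  have h := HasFKG.integral_mul_integral_le_integral_mul hFKG hfm.neg hgm hf.neg hg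
    (fun x => (abs_neg (f x)).trans_le (hfb x)) hgb
  simp only [Pi.neg_apply, neg_mul, integral_neg] at h
  linarith
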